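/- arXiv:1801.01371 — 2 statements merged into one kernel-verified Lean document; each statement's English description precedes it below -/
import Mathlib

section
/- Let F₁ be a countable collection of dyadic cubes (in a dyadic lattice on an ADR set) with locally finite overlap in the sense that the sum ∑_{Q ∈ F₁} σ(Q) is finite, and let M ∈ ℕ. Then there exists a subcollection F₂ ⊆ F₁ such that (i) whenever Q, Q* ∈ F₂ with Q ⊊ Q*, one has ℓ(Q) ≤ 2^{-M-1} ℓ(Q*), and (ii) ∑_{Q ∈ F₁} σ(Q) ≤ C(M, n, ADR) ∑_{Q ∈ F₂} σ(Q). -/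
/-!
Sort the cubes of `F₁` by the residue of their generation modulo `M + 1`. One of the `M + 1`
classes carries at least a `1 / (M + 1)` share of the total mass; keep its cubes of positive
mass. Two distinct nested cubes of positive mass lie in different generations, and within one
residue class different generations are at least `M + 1` apart.
-/

open MeasureTheory Set
open scoped ENNReal

theorem ENNReal.tsum_subtype_eq_sum_tsum_fiber {β γ : Type*} [Fintype γ] (s : Set β)
    (f : β → ℝ≥0∞) (g : β → γ) :
    ∑' b : s, f b = ∑ c, ∑' b : ↑(g ⁻¹' {c} ∩ s), f b := by
  rw [tsum_subtype, ← ENNReal.tsum_fiberwise _ g, tsum_fintype]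
  refine Finset.sum_congr rfl fun c _ => ?_
  rw [tsum_subtype, tsum_subtype, indicator_indicator]

theorem ENNReal.exists_tsum_subtype_le_card_mul_tsum_fiber {β γ : Type*} [Fintype γ]
    [Nonempty γ] (s : Set β) (f : β → ℝ≥0∞) (g : β → γ) :
    ∃ c, ∑' b : s, f b ≤ Fintype.card γ * ∑' b : ↑(g ⁻¹' {c} ∩ s), f b := by
  obtain ⟨c, -, hc⟩ := Finset.exists_max_image Finset.univ
    (fun c => ∑' b : ↑(g ⁻¹' {c} ∩ s), f b) Finset.univ_nonempty
  refine ⟨c, ?_⟩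
  calc ∑' b : s, f b = ∑ c', ∑' b : ↑(g ⁻¹' {c'} ∩ s), f b :=
        ENNReal.tsum_subtype_eq_sum_tsum_fiber s f g
    _ ≤ ∑ _c' : γ, ∑' b : ↑(g ⁻¹' {c} ∩ s), f b :=
        Finset.sum_le_sum fun c' _ => hc c' (Finset.mem_univ c')
    _ = Fintype.card γ * ∑' b : ↑(g ⁻¹' {c} ∩ s), f b := by
        rw [Finset.sum_const, nsmul_eq_mul, Finset.card_univ]

theorem ENNReal.tsum_inter_support {β : Type*} (s : Set β) (f : β → ℝ≥0∞) :
    ∑' b : ↑(s ∩ Function.support f), f b = ∑' b : s, f b := by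
  rw [tsum_subtype, tsum_subtype, indicator_inter_support]

theorem Int.add_le_of_lt_of_modEq {a b n : ℤ} (hab : a < b) (h : a ≡ b [ZMOD n]) :
    a + n ≤ b := by
  have := Int.le_of_dvd (by omega) h.dvd
  omega

theorem two_zpow_neg_le_mul_of_add_le {k k' : ℤ} {M : ℕ} (h : k' + (M + 1) ≤ k) :
    (2 : ℝ) ^ (-k) ≤ 2 ^ (-(M : ℤ) - 1) * 2 ^ (-k') := by
  rw [← zpow_add₀ two_ne_zero]
  exact zpow_le_zpow_right₀ one_le_two (by omega)

theorem snd_lt_snd_of_fst_subset {X : Type*} {F : Set (Set X × ℤ)}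
    (hgen : ∀ Q ∈ F, ∀ Q' ∈ F, Q.1 ⊆ Q'.1 → Q'.2 ≤ Q.2)
    (hdisj : ∀ Q ∈ F, ∀ Q' ∈ F, Q.2 = Q'.2 → Q ≠ Q' → Disjoint Q.1 Q'.1)
    {Q Q' : Set X × ℤ} (hQ : Q ∈ F) (hQ' : Q' ∈ F) (hne : Q.1.Nonempty) (hsub : Q.1 ⊆ Q'.1)
    (hQQ' : Q ≠ Q') : Q'.2 < Q.2 :=
  (hgen Q hQ Q' hQ' hsub).lt_of_ne fun heq =>
    hne.ne_empty ((hdisj Q hQ Q' hQ' heq.symm hQQ').eq_bot_of_le hsub)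

/-- Sparsification of a family of dyadic cubes: from a countable family `F₁` of
dyadic cubes (represented as pairs (set, generation), with side length
`ℓ(Q) = 2^{-Q.2}`) with finite total mass, one can extract `F₂ ⊆ F₁` such that
nested cubes of `F₂` are separated by at least `M+1` generations, and the total
mass of `F₁` is controlled by `C(M)` times that of `F₂`. -/
theorem dyadic_sparsification {X : Type*} [MeasurableSpace X]
    (σ : Measure X) (M : ℕ) :
    ∃ C : ℝ≥0∞, C ≠ ⊤ ∧
      ∀ (F₁ : Set (Set X × ℤ)), F₁.Countable →
        (∀ Q ∈ F₁, MeasurableSet Q.1) →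
        (∀ Q ∈ F₁, ∀ Q' ∈ F₁, Q.1 ⊆ Q'.1 ∨ Q'.1 ⊆ Q.1 ∨ Disjoint Q.1 Q'.1) →
        (∀ Q ∈ F₁, ∀ Q' ∈ F₁, Q.1 ⊆ Q'.1 → Q'.2 ≤ Q.2) →
        (∀ Q ∈ F₁, ∀ Q' ∈ F₁, Q.2 = Q'.2 → Q ≠ Q' → Disjoint Q.1 Q'.1) →
        (∃ k₀ : ℤ, ∀ Q ∈ F₁, k₀ ≤ Q.2) →
        (∑' Q : F₁, σ (Q : Set X × ℤ).1) ≠ ⊤ →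
        ∃ F₂ ⊆ F₁,
          (∀ Q ∈ F₂, ∀ Q' ∈ F₂, Q.1 ⊆ Q'.1 → Q ≠ Q' →
            (2 : ℝ) ^ (-Q.2) ≤ 2 ^ (-(M : ℤ) - 1) * 2 ^ (-Q'.2)) ∧
          (∑' Q : F₁, σ (Q : Set X × ℤ).1) ≤ C * ∑' Q : F₂, σ (Q : Set X × ℤ).1 := by
  refine ⟨M + 1, by simp, fun F₁ _ _ _ hgen hdisj _ _ => ?_⟩
  set residue : Set X × ℤ → ZMod (M + 1) := fun Q => Q.2
  obtain ⟨r, hr⟩ :=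
    ENNReal.exists_tsum_subtype_le_card_mul_tsum_fiber F₁ (fun Q => σ Q.1) residue
  refine ⟨residue ⁻¹' {r} ∩ F₁ ∩ Function.support fun Q => σ Q.1, fun Q hQ => hQ.1.2, ?_, ?_⟩
  · rintro Q ⟨⟨hQr, hQ⟩, hQσ⟩ Q' ⟨⟨hQ'r, hQ'⟩, -⟩ hsub hQQ'
    have hlt := snd_lt_snd_of_fst_subset hgen hdisj hQ hQ'
      (nonempty_of_measure_ne_zero hQσ) hsub hQQ'
    have hmod : Q'.2 ≡ Q.2 [ZMOD (M + 1 : ℕ)] :=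
      (ZMod.intCast_eq_intCast_iff _ _ _).1 (hQ'r.trans hQr.symm)
    exact two_zpow_neg_le_mul_of_add_le (by exact_mod_cast Int.add_le_of_lt_of_modEq hlt hmod)
  · rw [ENNReal.tsum_inter_support, ← Nat.cast_add_one]
    rwa [ZMod.card] at hr
end

section
/- Let Ω ⊂ ℝ^{n+1} be an open set such that σ := Hⁿ|_{∂Ω} is locally finite and σ(∂Ω \ K) = 0, where K is the cone set of Ω (the set of boundary points x admitting an open truncated cone with vertex x contained in Ω). Assume: (a) there is a countable collection {Ω_i} of bounded Lipschitz subdomains of Ω with σ(∂Ω \ ⋃_i ∂Ω_i) = 0, and (b) bounded harmonic functions on each bounded Lipschitz domain have non-tangential limits at Hⁿ-a.e. boundary point. Then every bounded harmonic function u on Ω has a weak non-tangential limit at σ-a.e. x ∈ ∂Ω. -/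
open MeasureTheory Metric Filter

/-- `u` is harmonic on the open set `Ω ⊆ ℝ^m`: it is `C²` there and the sum of
its pure second derivatives vanishes. -/
def IsHarmonicOn (m : ℕ) (u : EuclideanSpace ℝ (Fin m) → ℝ)
    (Ω : Set (EuclideanSpace ℝ (Fin m))) : Prop :=
  ContDiffOn ℝ 2 u Ω ∧ ∀ x ∈ Ω,
    ∑ i : Fin m, iteratedFDerivWithin ℝ 2 u Ω x
      ![EuclideanSpace.single i (1 : ℝ), EuclideanSpace.single i (1 : ℝ)] = 0

/-- The open truncated cone with vertex `x`, axis `v`, aperture parameter `a`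
and height `h`. -/
def TruncCone (m : ℕ) (x v : EuclideanSpace ℝ (Fin m)) (a h : ℝ) :
    Set (EuclideanSpace ℝ (Fin m)) :=
  {y | dist y x < h ∧ a * dist y x < (inner ℝ (y - x) v : ℝ)}

/-- `u` has a weak non-tangential limit at `x` relative to `Ω`: for some open
truncated cone with vertex `x` contained in `Ω`, `u` has a limit along it. -/
def HasWeakNTLimitAt (m : ℕ) (u : EuclideanSpace ℝ (Fin m) → ℝ)
    (Ω : Set (EuclideanSpace ℝ (Fin m))) (x : EuclideanSpace ℝ (Fin m)) : Prop :=
  ∃ v a h, ‖v‖ = 1 ∧ 0 < a ∧ a < 1 ∧ 0 < h ∧ TruncCone m x v a h ⊆ Ω ∧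
    ∃ L : ℝ, Tendsto u (nhdsWithin x (TruncCone m x v a h)) (nhds L)

/-- The cone set of `Ω`: boundary points admitting an open truncated cone with
vertex there contained in `Ω`. -/
def coneSet (m : ℕ) (Ω : Set (EuclideanSpace ℝ (Fin m))) :
    Set (EuclideanSpace ℝ (Fin m)) :=
  {x ∈ frontier Ω | ∃ v a h, ‖v‖ = 1 ∧ 0 < a ∧ a < 1 ∧ 0 < h ∧
    TruncCone m x v a h ⊆ Ω}

/-!
A cone of a subdomain `Ωᵢ ⊆ Ω` with vertex `x ∈ ∂Ωᵢ` is also a cone of `Ω`, so a non-tangential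
limit of `u|_{Ωᵢ}` at `x` is a weak non-tangential limit of `u` at `x`. Since `u|_{Ωᵢ}` is again
bounded and harmonic, Fatou's theorem on each `Ωᵢ` leaves only a null set of `∂Ωᵢ` without limit,
and countably many such null sets together with `∂Ω \ ⋃ᵢ ∂Ωᵢ` cover the bad set of `∂Ω`.
-/

section

variable {m : ℕ} {u : EuclideanSpace ℝ (Fin m) → ℝ} {U Ω : Set (EuclideanSpace ℝ (Fin m))}

theorem IsHarmonicOn.mono_of_isOpen (hu : IsHarmonicOn m u Ω) (hU : IsOpen U) (hUΩ : U ⊆ Ω) :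
    IsHarmonicOn m u U := by
  refine ⟨hu.1.mono hUΩ, fun x hx => ?_⟩
  have hlocal : iteratedFDerivWithin ℝ 2 u U x = iteratedFDerivWithin ℝ 2 u Ω x := by
    simpa only [Set.inter_eq_right.mpr hUΩ] using
      iteratedFDerivWithin_inter_open (𝕜 := ℝ) (f := u) (s := Ω) (n := 2) hU hx
  rw [hlocal]
  exact hu.2 x (hUΩ hx)

theorem HasWeakNTLimitAt.mono {x : EuclideanSpace ℝ (Fin m)} (h : HasWeakNTLimitAt m u U x)
    (hUΩ : U ⊆ Ω) : HasWeakNTLimitAt m u Ω x :=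
  let ⟨v, a, r, hv, ha, ha1, hr, hcone, hlim⟩ := h
  ⟨v, a, r, hv, ha, ha1, hr, hcone.trans hUΩ, hlim⟩

theorem setOf_not_hasWeakNTLimitAt_subset {ι : Type*} {Ωi : ι → Set (EuclideanSpace ℝ (Fin m))}
    (hΩi : ∀ i, Ωi i ⊆ Ω) :
    {x ∈ frontier Ω | ¬ HasWeakNTLimitAt m u Ω x} ⊆
      (frontier Ω \ ⋃ i, frontier (Ωi i)) ∪
        ⋃ i, {x ∈ frontier (Ωi i) | ¬ HasWeakNTLimitAt m u (Ωi i) x} := by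
  rintro x ⟨hxΩ, hnot⟩
  by_cases hx : x ∈ ⋃ i, frontier (Ωi i)
  · obtain ⟨i, hxi⟩ := Set.mem_iUnion.mp hx
    exact Or.inr (Set.mem_iUnion.mpr ⟨i, hxi, fun hlim => hnot (hlim.mono (hΩi i))⟩)
  · exact Or.inl ⟨hxΩ, hx⟩

end

theorem qualitative_fatou_general (n : ℕ)
    (Ω : Set (EuclideanSpace ℝ (Fin (n + 1))))
    (Ωi : ℕ → Set (EuclideanSpace ℝ (Fin (n + 1))))
    (hΩiopen : ∀ i, IsOpen (Ωi i)) (hΩisub : ∀ i, Ωi i ⊆ Ω)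
    (hcover : μH[(n : ℝ)] (frontier Ω \ ⋃ i, frontier (Ωi i)) = 0)
    (hfatou : ∀ i, ∀ v : EuclideanSpace ℝ (Fin (n + 1)) → ℝ,
      IsHarmonicOn (n + 1) v (Ωi i) → (∃ Mb : ℝ, ∀ x ∈ Ωi i, |v x| ≤ Mb) →
      μH[(n : ℝ)] {x ∈ frontier (Ωi i) | ¬ HasWeakNTLimitAt (n + 1) v (Ωi i) x} = 0) :
    ∀ u : EuclideanSpace ℝ (Fin (n + 1)) → ℝ,
      IsHarmonicOn (n + 1) u Ω → (∃ Mb : ℝ, ∀ x ∈ Ω, |u x| ≤ Mb) →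
      μH[(n : ℝ)] {x ∈ frontier Ω | ¬ HasWeakNTLimitAt (n + 1) u Ω x} = 0 := by
  rintro u hu ⟨M, hM⟩
  have hnull : ∀ i,
      μH[(n : ℝ)] {x ∈ frontier (Ωi i) | ¬ HasWeakNTLimitAt (n + 1) u (Ωi i) x} = 0 := fun i =>
    hfatou i u (hu.mono_of_isOpen (hΩiopen i) (hΩisub i)) ⟨M, fun x hx => hM x (hΩisub i hx)⟩
  exact measure_mono_null (setOf_not_hasWeakNTLimitAt_subset hΩisub)
    (measure_union_null hcover (measure_iUnion_null hnull))

/-- Qualitative Fatou theorem on rough open sets: if `σ = Hⁿ|_{∂Ω}` is locally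
finite, σ-a.e. boundary point is in the cone set, and `Ω` admits countably many
bounded open (Lipschitz) subdomains covering σ-a.a. of `∂Ω` on each of which
bounded harmonic functions have weak non-tangential limits a.e., then every
bounded harmonic function on `Ω` has a weak non-tangential limit at σ-a.e.
boundary point. -/
theorem qualitative_fatou (n : ℕ)
    (Ω : Set (EuclideanSpace ℝ (Fin (n + 1)))) (hΩ : IsOpen Ω)
    (hlocfin : IsLocallyFiniteMeasure (μH[(n : ℝ)].restrict (frontier Ω)))
    (hcone : μH[(n : ℝ)] (frontier Ω \ coneSet (n + 1) Ω) = 0)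
    (Ωi : ℕ → Set (EuclideanSpace ℝ (Fin (n + 1))))
    (hΩiopen : ∀ i, IsOpen (Ωi i)) (hΩisub : ∀ i, Ωi i ⊆ Ω)
    (hΩibdd : ∀ i, Bornology.IsBounded (Ωi i))
    (hcover : μH[(n : ℝ)] (frontier Ω \ ⋃ i, frontier (Ωi i)) = 0)
    (hfatou : ∀ i, ∀ v : EuclideanSpace ℝ (Fin (n + 1)) → ℝ,
      IsHarmonicOn (n + 1) v (Ωi i) → (∃ Mb : ℝ, ∀ x ∈ Ωi i, |v x| ≤ Mb) →
      μH[(n : ℝ)] {x ∈ frontier (Ωi i) | ¬ HasWeakNTLimitAt (n + 1) v (Ωi i) x} = 0) :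
    ∀ u : EuclideanSpace ℝ (Fin (n + 1)) → ℝ,
      IsHarmonicOn (n + 1) u Ω → (∃ Mb : ℝ, ∀ x ∈ Ω, |u x| ≤ Mb) →
      μH[(n : ℝ)] {x ∈ frontier Ω | ¬ HasWeakNTLimitAt (n + 1) u Ω x} = 0 :=
  qualitative_fatou_general n Ω Ωi hΩiopen hΩisub hcover hfatou
end
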